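/- arXiv:1503.06629 — 3 statements merged into one kernel-verified Lean document; each statement's English description precedes it below -/
import Mathlib

section
/- If every nonzero signal g with g_S = 0 has bandwidth ω(g) > ω (i.e., ω < inf over nonzero g ∈ L_2(S^c) of ω(g)), then any signal in PW_ω(G) is uniquely determined by its samples on S. -/
open Matrix

/-- If every nonzero signal `g` vanishing on `S` has bandwidth greater than `ω`
(i.e. some GFT coefficient of `g` at a frequency `> ω` is nonzero), then any signal in
`PW_ω(G)` (the span of eigenvectors `u i` with eigenvalue `lam i ≤ ω`) is uniquely
determined by its samples on `S`. -/
theorem uniqueness_of_bandwidth_gap {N : ℕ}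
    (u : Fin N → Fin N → ℝ) (lam : Fin N → ℝ)
    (hortho : ∀ i j, u i ⬝ᵥ u j = if i = j then (1 : ℝ) else 0)
    (ω : ℝ) (S : Finset (Fin N))
    (hband : ∀ g : Fin N → ℝ, g ≠ 0 → (∀ i ∈ S, g i = 0) →
      ∃ i, ω < lam i ∧ u i ⬝ᵥ g ≠ 0) :
    ∀ f₁ ∈ Submodule.span ℝ {v : Fin N → ℝ | ∃ i, lam i ≤ ω ∧ v = u i},
      ∀ f₂ ∈ Submodule.span ℝ {v : Fin N → ℝ | ∃ i, lam i ≤ ω ∧ v = u i},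
        (∀ i ∈ S, f₁ i = f₂ i) → f₁ = f₂ := by
  intro f₁ h₁ f₂ h₂ hS
  by_contra hne
  set g := f₁ - f₂ with hg
  have hg0 : g ≠ 0 := sub_ne_zero.mpr hne
  have hgS : ∀ i ∈ S, g i = 0 := by
    intro i hi; simp [hg, hS i hi]
  obtain ⟨i, hlam, hdot⟩ := hband g hg0 hgS
  apply hdot
  have key : ∀ f ∈ Submodule.span ℝ {v : Fin N → ℝ | ∃ j, lam j ≤ ω ∧ v = u j},
      u i ⬝ᵥ f = 0 := by
    intro f hf
    induction hf using Submodule.span_induction with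
    | mem v hv =>
      obtain ⟨j, hj, rfl⟩ := hv
      have : i ≠ j := fun h => absurd (h ▸ hj) (not_le.mpr hlam)
      simp [hortho i j, this]
    | zero => simp
    | add x y _ _ hx hy => rw [dotProduct_add, hx, hy, add_zero]
    | smul c x _ hx => rw [dotProduct_smul, hx, smul_zero]
  have := key f₁ h₁
  have := key f₂ h₂
  simp [hg, dotProduct_sub, *]
end

section
/- λ_min[(L^k)_{S^c}]^{1/k} ≤ ω(S) for all k ≥ 1, i.e., any nonzero signal g supported on S^c (g_S = 0) has bandwidth ω(g) ≥ (λ_min[(L^k)_{S^c}])^{1/k}. -/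
/-!
A signal `g` supported on `Sᶜ` has the same quadratic form for `Lᵏ` as its restriction has for
`(Lᵏ)_{Sᶜ}`, so the Rayleigh bound gives `λ_min ‖g‖² ≤ gᵀ Lᵏ g`. In the eigenbasis `u`,
`gᵀ Lᵏ g = ∑ λᵢᵏ cᵢ²` with `cᵢ = uᵢ ⬝ g`, which is at most `λᵢᵏ ‖g‖²` for the largest `λᵢ`
with `cᵢ ≠ 0`. Positive semidefiniteness makes `λ_min` and `λᵢ` nonnegative, so `k`-th roots
can be taken.
-/

open Matrix

namespace Matrix

variable {n : Type*} [Fintype n]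

theorem PosSemidef.nonneg_of_mulVec_eq_smul {A : Matrix n n ℝ} (hA : A.PosSemidef)
    {v : n → ℝ} {μ : ℝ} (hv : v ≠ 0) (h : A *ᵥ v = μ • v) : 0 ≤ μ := by
  have hpos : 0 < v ⬝ᵥ v := dotProduct_self_star_pos_iff.mpr hv
  have := hA.dotProduct_mulVec_nonneg v
  rw [star_trivial, h, dotProduct_smul, smul_eq_mul] at this
  exact nonneg_of_mul_nonneg_left this hpos

theorem IsHermitian.mul_dotProduct_self_le_dotProduct_mulVec [DecidableEq n]
    {M : Matrix n n ℝ} (hM : M.IsHermitian) {c : ℝ}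
    (hc : ∀ (μ : ℝ) (v : n → ℝ), v ≠ 0 → M *ᵥ v = μ • v → c ≤ μ) (v : n → ℝ) :
    c * (v ⬝ᵥ v) ≤ v ⬝ᵥ (M *ᵥ v) := by
  have hshift : (M - c • 1).IsHermitian := hM.sub (isHermitian_one.smul (IsSelfAdjoint.all c))
  -- the eigenvalues of `M - c • 1` are those of `M` shifted by `-c`
  have hpsd : (M - c • 1).PosSemidef := by
    refine hshift.posSemidef_iff_eigenvalues_nonneg.mpr fun i => ?_
    have hb := hshift.mulVec_eigenvectorBasis i
    rw [sub_mulVec, smul_mulVec, one_mulVec, sub_eq_iff_eq_add, ← add_smul] at hb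
    have := hc _ _ (by simpa using hshift.eigenvectorBasis.orthonormal.ne_zero i) hb
    simp only [Pi.zero_apply]
    linarith
  have := hpsd.dotProduct_mulVec_nonneg v
  rw [star_trivial, sub_mulVec, smul_mulVec, one_mulVec, dotProduct_sub, dotProduct_smul,
    smul_eq_mul] at this
  linarith

section CommRing

variable {R : Type*} [CommRing R]

theorem pow_mulVec_of_mulVec_eq_smul [DecidableEq n] {A : Matrix n n R} {v : n → R} {μ : R}
    (h : A *ᵥ v = μ • v) (k : ℕ) : (A ^ k) *ᵥ v = μ ^ k • v := by
  induction k with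
  | zero => simp
  | succ k ih => rw [pow_succ, ← mulVec_mulVec, h, mulVec_smul, ih, smul_smul, pow_succ']

theorem eq_sum_dotProduct_smul_of_orthonormal [DecidableEq n] {u : n → n → R}
    (hu : ∀ i j, u i ⬝ᵥ u j = if i = j then 1 else 0) (g : n → R) :
    g = ∑ i, (u i ⬝ᵥ g) • u i := by
  have hrows : of u * (of u)ᵀ = 1 := by
    ext i j
    simpa [mul_apply, one_apply, dotProduct] using hu i j
  calc g = ((of u)ᵀ * of u) *ᵥ g := by rw [mul_eq_one_comm.mp hrows, one_mulVec]
    _ = ∑ i, (u i ⬝ᵥ g) • u i := by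
      rw [← mulVec_mulVec, mulVec_transpose, vecMul_eq_sum]
      rfl

theorem dotProduct_mulVec_eq_sum_of_orthonormal [DecidableEq n] {u : n → n → R}
    (hu : ∀ i j, u i ⬝ᵥ u j = if i = j then 1 else 0) {A : Matrix n n R} {lam : n → R}
    (heig : ∀ i, A *ᵥ u i = lam i • u i) (g : n → R) :
    g ⬝ᵥ (A *ᵥ g) = ∑ i, lam i * (u i ⬝ᵥ g) ^ 2 := by
  have hAg : A *ᵥ g = ∑ i, ((u i ⬝ᵥ g) * lam i) • u i := by
    conv_lhs => rw [eq_sum_dotProduct_smul_of_orthonormal hu g]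
    simp only [mulVec_sum, mulVec_smul, heig, smul_smul]
  rw [hAg, dotProduct_sum]
  refine Finset.sum_congr rfl fun i _ => ?_
  rw [dotProduct_smul, smul_eq_mul, dotProduct_comm]
  ring

end CommRing

section Semiring

variable {m R : Type*} [Fintype m] [NonUnitalNonAssocSemiring R] {e : m → n}

theorem submatrix_mulVec_comp_of_injective (A : Matrix n n R) (he : e.Injective) {g : n → R}
    (hg : ∀ i ∉ Set.range e, g i = 0) : A.submatrix e e *ᵥ (g ∘ e) = (A *ᵥ g) ∘ e := by
  ext i
  exact Fintype.sum_of_injective e he _ _ (fun j hj => by simp [hg j hj]) fun _ => rfl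

theorem comp_dotProduct_comp_of_injective (he : e.Injective) {g : n → R}
    (hg : ∀ i ∉ Set.range e, g i = 0) (w : n → R) : (g ∘ e) ⬝ᵥ (w ∘ e) = g ⬝ᵥ w :=
  Fintype.sum_of_injective e he _ _ (fun j hj => by simp [hg j hj]) fun _ => rfl

end Semiring

end Matrix

theorem exists_ne_zero_sum_mul_sq_le {ι R : Type*} [Fintype ι] [CommRing R] [LinearOrder R]
    [IsStrictOrderedRing R] (w c : ι → R) (hc : c ≠ 0) :
    ∃ i, c i ≠ 0 ∧ ∑ j, w j * c j ^ 2 ≤ w i * ∑ j, c j ^ 2 := by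
  classical
  obtain ⟨j₀, hj₀⟩ := Function.ne_iff.mp hc
  obtain ⟨i, hi, hmax⟩ := Finset.exists_max_image {j | c j ≠ 0} w ⟨j₀, by simpa using hj₀⟩
  refine ⟨i, by simpa using hi, ?_⟩
  rw [Finset.mul_sum]
  refine Finset.sum_le_sum fun j _ => ?_
  by_cases hj : c j = 0
  · simp [hj]
  · exact mul_le_mul_of_nonneg_right (hmax j (by simpa using hj)) (sq_nonneg _)

/-- Any nonzero signal `g` supported on `Sᶜ` (i.e. `g_S = 0`) has bandwidth
`ω(g) ≥ (λ_min[(L^k)_{Sᶜ}])^{1/k}`: some eigenvector `u i` with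
`lam i ≥ (λ_min[(L^k)_{Sᶜ}])^{1/k}` has nonzero GFT coefficient `u i ⬝ᵥ g`.
Hence `Ω_k(S) = (λ_min[(L^k)_{Sᶜ}])^{1/k} ≤ ω(S)`. -/
theorem cutoff_estimate_le_bandwidth {N : ℕ}
    (L : Matrix (Fin N) (Fin N) ℝ) (hL : L.PosSemidef)
    (u : Fin N → Fin N → ℝ) (lam : Fin N → ℝ)
    (hortho : ∀ i j, u i ⬝ᵥ u j = if i = j then (1 : ℝ) else 0)
    (heig : ∀ i, L *ᵥ u i = lam i • u i)
    (S : Finset (Fin N)) (k : ℕ) (hk : 1 ≤ k) (lmin : ℝ)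
    (hlmin : IsLeast {μ : ℝ | ∃ v : {x // x ∉ S} → ℝ, v ≠ 0 ∧
      ((L ^ k).submatrix (fun i : {x // x ∉ S} => (i : Fin N))
        (fun i : {x // x ∉ S} => (i : Fin N))) *ᵥ v = μ • v} lmin)
    (g : Fin N → ℝ) (hg : g ≠ 0) (hgS : ∀ i ∈ S, g i = 0) :
    ∃ i, u i ⬝ᵥ g ≠ 0 ∧ lmin ^ ((1 : ℝ) / k) ≤ lam i := by
  set c : Fin N → ℝ := fun i => u i ⬝ᵥ g
  have hnorm : g ⬝ᵥ g = ∑ i, c i ^ 2 := by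
    simpa using dotProduct_mulVec_eq_sum_of_orthonormal hortho (A := 1) (lam := 1) (by simp) g
  have hpos : 0 < ∑ i, c i ^ 2 := hnorm ▸ dotProduct_self_star_pos_iff.mpr hg
  obtain ⟨i, hci, hmax⟩ :=
    exists_ne_zero_sum_mul_sq_le (fun i => lam i ^ k) c fun h => by simp [h] at hpos
  have hg_off : ∀ j ∉ Set.range (Subtype.val : {x // x ∉ S} → Fin N), g j = 0 :=
    fun j hj => hgS j (not_not.mp fun h => hj ⟨⟨j, h⟩, rfl⟩)
  have hsub : ((L ^ k).submatrix (Subtype.val : {x // x ∉ S} → Fin N) Subtype.val).PosSemidef :=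
    (hL.pow k).submatrix _
  have hray : lmin * (g ⬝ᵥ g) ≤ g ⬝ᵥ (L ^ k *ᵥ g) := by
    rw [← comp_dotProduct_comp_of_injective Subtype.val_injective hg_off,
      ← comp_dotProduct_comp_of_injective Subtype.val_injective hg_off,
      ← submatrix_mulVec_comp_of_injective _ Subtype.val_injective hg_off]
    exact hsub.isHermitian.mul_dotProduct_self_le_dotProduct_mulVec
      (fun μ v hv h => hlmin.2 ⟨v, hv, h⟩) _
  have hlmin_le : lmin ≤ lam i ^ k := by
    rw [hnorm, dotProduct_mulVec_eq_sum_of_orthonormal hortho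
      (fun j => pow_mulVec_of_mulVec_eq_smul (heig j) k)] at hray
    exact le_of_mul_le_mul_right (hray.trans hmax) hpos
  have hlmin_nonneg : 0 ≤ lmin := by
    obtain ⟨v, hv, h⟩ := hlmin.1
    exact hsub.nonneg_of_mulVec_eq_smul hv h
  have hlam_nonneg : 0 ≤ lam i :=
    hL.nonneg_of_mulVec_eq_smul (fun h => by simpa [h] using hortho i i) (heig i)
  refine ⟨i, hci, ?_⟩
  calc lmin ^ ((1 : ℝ) / k) ≤ (lam i ^ k) ^ ((k : ℝ)⁻¹) := by
        rw [one_div]; exact Real.rpow_le_rpow hlmin_nonneg hlmin_le (by positivity)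
    _ = lam i := Real.pow_rpow_inv_natCast hlam_nonneg (by omega)
end

section
/- Let K̂ = U_{VR} Σ_R U_{VR}^T be a rank-r covariance, partitioned into blocks K̂_{S^c}, K̂_{S^c S}, K̂_{S S^c}, K̂_S according to a subset S. If U_{SR} has full column rank, then the MAP/conditional mean K̂_{S^c S}(K̂_S)^+ f_S equals the least squares bandlimited reconstruction U_{S^c R}(U_{SR}^T U_{SR})^{-1} U_{SR}^T f_S for every f_S in the column span of U_{SR}. -/
/-!
Write `B = U_{SR}`, `D = Σ_R` and `G = Bᵀ B`, which is invertible since `B` has full column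
rank. Then `G⁻¹ Bᵀ` is a left inverse of `B`, and cancelling it and its transpose from
`(B D Bᵀ) P (B D Bᵀ) = B D Bᵀ` gives `D (Bᵀ P B) D = D`, i.e. `D Bᵀ P B = 1`. Hence for
`f_S = B a` both sides reduce to `U_{SᶜR} a`: the MAP estimate because
`U_{SᶜR} D Bᵀ P B = U_{SᶜR}`, the least squares reconstruction because `G⁻¹ Bᵀ B = 1`.
-/

open Matrix

/-- `P` is the Moore–Penrose pseudoinverse of `A` (the four Penrose conditions;
the Moore–Penrose pseudoinverse is unique). -/
def IsMoorePenrose {α β : Type*} [Fintype α] [Fintype β]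
    (A : Matrix α β ℝ) (P : Matrix β α ℝ) : Prop :=
  A * P * A = A ∧ P * A * P = P ∧ (A * P)ᵀ = A * P ∧ (P * A)ᵀ = P * A

namespace Matrix

theorem isUnit_of_rank_eq_card {n K : Type*} [Fintype n] [DecidableEq n] [Field K]
    (A : Matrix n n K) (h : A.rank = Fintype.card n) : IsUnit A := by
  rw [← mulVec_surjective_iff_isUnit, ← coe_mulVecLin, ← LinearMap.range_eq_top]
  apply Submodule.eq_top_of_finrank_eq
  rw [← rank, h, Module.finrank_fintype_fun_eq_card]

theorem isUnit_transpose_mul_self_of_rank_eq_card {m n K : Type*} [Fintype m] [Fintype n]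
    [DecidableEq n] [Field K] [LinearOrder K] [IsStrictOrderedRing K]
    (B : Matrix m n K) (h : B.rank = Fintype.card n) : IsUnit (Bᵀ * B) :=
  isUnit_of_rank_eq_card _ (by rw [rank_transpose_mul_self, h])

theorem mul_transpose_mul_mul_eq_one_of_mul_mul_eq_self {m n R : Type*} [Fintype m] [Fintype n]
    [DecidableEq n] [CommRing R] {B : Matrix m n R} {L : Matrix n m R} (hLB : L * B = 1)
    {D : Matrix n n R} (hD : IsUnit D) {P : Matrix m m R}
    (hP : B * D * Bᵀ * P * (B * D * Bᵀ) = B * D * Bᵀ) :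
    D * (Bᵀ * P * B) = 1 := by
  have hBL : Bᵀ * Lᵀ = 1 := by rw [← transpose_mul, hLB, transpose_one]
  have hDPD : D * (Bᵀ * P * B) * D = 1 * D :=
    calc D * (Bᵀ * P * B) * D
        = L * B * D * (Bᵀ * P * B) * D * (Bᵀ * Lᵀ) := by
          rw [hLB, hBL, Matrix.one_mul, Matrix.mul_one]
      _ = L * (B * D * Bᵀ * P * (B * D * Bᵀ)) * Lᵀ := by simp only [Matrix.mul_assoc]
      _ = L * B * D * (Bᵀ * Lᵀ) := by rw [hP]; simp only [Matrix.mul_assoc]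
      _ = 1 * D := by rw [hLB, hBL, Matrix.mul_one]
  exact hD.mul_left_inj.mp hDPD

end Matrix

theorem map_inference_eq_bandlimited_reconstruction_general {N r : ℕ}
    (U : Matrix (Fin N) (Fin r) ℝ)
    (d : Fin r → ℝ) (hd : ∀ i, 0 < d i) (S : Finset (Fin N))
    (hrank : (U.submatrix (fun i : {x // x ∈ S} => (i : Fin N)) id).rank = r)
    (P : Matrix {x // x ∈ S} {x // x ∈ S} ℝ)
    (hP : IsMoorePenrose
      (U.submatrix (fun i : {x // x ∈ S} => (i : Fin N)) id * Matrix.diagonal d *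
        (U.submatrix (fun i : {x // x ∈ S} => (i : Fin N)) id)ᵀ) P)
    (fS : {x // x ∈ S} → ℝ)
    (hfS : ∃ a : Fin r → ℝ,
      fS = U.submatrix (fun i : {x // x ∈ S} => (i : Fin N)) id *ᵥ a) :
    (U.submatrix (fun i : {x // x ∉ S} => (i : Fin N)) id * Matrix.diagonal d *
        (U.submatrix (fun i : {x // x ∈ S} => (i : Fin N)) id)ᵀ) *ᵥ (P *ᵥ fS)
      = U.submatrix (fun i : {x // x ∉ S} => (i : Fin N)) id *ᵥ
          (((U.submatrix (fun i : {x // x ∈ S} => (i : Fin N)) id)ᵀ *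
              U.submatrix (fun i : {x // x ∈ S} => (i : Fin N)) id)⁻¹ *ᵥ
            ((U.submatrix (fun i : {x // x ∈ S} => (i : Fin N)) id)ᵀ *ᵥ fS)) := by
  obtain ⟨a, rfl⟩ := hfS
  set B := U.submatrix (fun i : {x // x ∈ S} => (i : Fin N)) id
  set C := U.submatrix (fun i : {x // x ∉ S} => (i : Fin N)) id
  have hG : IsUnit (Bᵀ * B) :=
    isUnit_transpose_mul_self_of_rank_eq_card B (by rw [hrank, Fintype.card_fin])
  have hLB : (Bᵀ * B)⁻¹ * Bᵀ * B = 1 := by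
    rw [Matrix.mul_assoc, nonsing_inv_mul _ ((isUnit_iff_isUnit_det _).mp hG)]
  have hD : IsUnit (diagonal d) := by
    rw [isUnit_diagonal, Pi.isUnit_iff]
    exact fun i => (hd i).ne'.isUnit
  have hDPB := mul_transpose_mul_mul_eq_one_of_mul_mul_eq_self hLB hD hP.1
  calc (C * diagonal d * Bᵀ) *ᵥ (P *ᵥ (B *ᵥ a))
      = (C * (diagonal d * (Bᵀ * P * B))) *ᵥ a := by simp only [mulVec_mulVec, Matrix.mul_assoc]
    _ = (C * ((Bᵀ * B)⁻¹ * Bᵀ * B)) *ᵥ a := by rw [hDPB, hLB]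
    _ = C *ᵥ ((Bᵀ * B)⁻¹ *ᵥ (Bᵀ *ᵥ (B *ᵥ a))) := by
      simp only [mulVec_mulVec, Matrix.mul_assoc]

/-- With the rank-`r` covariance `K̂ = U_{VR} Σ_R U_{VR}ᵀ` and `U_{SR}` of full column
rank, the MAP/conditional mean `K̂_{Sᶜ S} (K̂_S)⁺ f_S` equals the least squares
bandlimited reconstruction `U_{SᶜR} (U_{SR}ᵀ U_{SR})⁻¹ U_{SR}ᵀ f_S` for every `f_S`
in the column span of `U_{SR}`. -/
theorem map_inference_eq_bandlimited_reconstruction {N r : ℕ}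
    (U : Matrix (Fin N) (Fin r) ℝ) (hU : Uᵀ * U = 1)
    (d : Fin r → ℝ) (hd : ∀ i, 0 < d i) (S : Finset (Fin N))
    (hrank : (U.submatrix (fun i : {x // x ∈ S} => (i : Fin N)) id).rank = r)
    (P : Matrix {x // x ∈ S} {x // x ∈ S} ℝ)
    (hP : IsMoorePenrose
      (U.submatrix (fun i : {x // x ∈ S} => (i : Fin N)) id * Matrix.diagonal d *
        (U.submatrix (fun i : {x // x ∈ S} => (i : Fin N)) id)ᵀ) P)
    (fS : {x // x ∈ S} → ℝ)
    (hfS : ∃ a : Fin r → ℝ,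
      fS = U.submatrix (fun i : {x // x ∈ S} => (i : Fin N)) id *ᵥ a) :
    (U.submatrix (fun i : {x // x ∉ S} => (i : Fin N)) id * Matrix.diagonal d *
        (U.submatrix (fun i : {x // x ∈ S} => (i : Fin N)) id)ᵀ) *ᵥ (P *ᵥ fS)
      = U.submatrix (fun i : {x // x ∉ S} => (i : Fin N)) id *ᵥ
          (((U.submatrix (fun i : {x // x ∈ S} => (i : Fin N)) id)ᵀ *
              U.submatrix (fun i : {x // x ∈ S} => (i : Fin N)) id)⁻¹ *ᵥ
            ((U.submatrix (fun i : {x // x ∈ S} => (i : Fin N)) id)ᵀ *ᵥ fS)) :=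
  map_inference_eq_bandlimited_reconstruction_general U d hd S hrank P hP fS hfS
end
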